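/- arXiv:2511.23266 — 6 statements merged into one kernel-verified Lean document; each statement's English description precedes it below -/
import Mathlib

section
/- Let d ≥ 1, s ≥ 1 and a < b be real numbers. Let I be a quadrature functional. Let H : ℝ^d → ℝ be continuously differentiable with gradient ∇H, and let B : ℝ^d → ℝ^{d×d} be such that B(z) is skew-symmetric for every z. Suppose x : ℝ → ℝ^d is a polynomial map of degree ≤ s and g : ℝ → ℝ^d is a polynomial map of degree ≤ s−1 such that: (i) for every polynomial map y : ℝ → ℝ^d of degree ≤ s−1, I(t ↦ y(t)ᵀ x′(t)) = I(t ↦ y(t)ᵀ B(x(t)) g(t)); and (ii) for every polynomial map y₀ : ℝ → ℝ^d of degree ≤ s−1, I(t ↦ g(t)ᵀ y₀(t)) = ∫_a^b ∇H(x(t))ᵀ y₀(t) dt. Then H(x(b)) = H(x(a)). -/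
open Matrix

/-- The continuous linear functional `w ↦ g ⬝ᵥ w` on `Fin d → ℝ`,
representing the gradient vector `g` as a (Fréchet) derivative. -/
noncomputable def dotCLM {d : ℕ} (g : Fin d → ℝ) : (Fin d → ℝ) →L[ℝ] ℝ :=
  LinearMap.toContinuousLinearMap
  { toFun := fun w => g ⬝ᵥ w
    map_add' := by
      intro a b
      simp [dotProduct, mul_add, Finset.sum_add_distrib]
    map_smul' := by
      intro c a
      simp [dotProduct, Finset.mul_sum, mul_left_comm] }

/-- `y : ℝ → Fin d → ℝ` is a polynomial map of degree at most `k`: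
each component is a real polynomial function of degree at most `k`. -/
def IsPolyMap {d : ℕ} (k : ℕ) (y : ℝ → Fin d → ℝ) : Prop :=
  ∀ i : Fin d, ∃ q : Polynomial ℝ, q.natDegree ≤ k ∧ ∀ t : ℝ, y t i = q.eval t

/-!
Test condition (i) against `y = g`: skew-symmetry of `B` makes `g ⬝ᵥ B(x) g` vanish pointwise,
so `I (g ⬝ᵥ x') = 0`. Since `x'` is a polynomial map of degree `≤ s - 1`, condition (ii) may be
tested against `y₀ = x'`, which turns the same quantity into `∫ₐᵇ ∇H(x) ⬝ᵥ x'`; by the chain rule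
and the fundamental theorem of calculus this is `H (x b) - H (x a)`.
-/

theorem Matrix.dotProduct_mulVec_self_eq_zero_of_transpose_eq_neg {n R : Type*} [Fintype n]
    [CommRing R] [IsAddTorsionFree R] {A : Matrix n n R} (hA : Aᵀ = -A) (v : n → R) :
    v ⬝ᵥ A *ᵥ v = 0 := by
  refine self_eq_neg.mp ?_
  calc v ⬝ᵥ A *ᵥ v = Aᵀ *ᵥ v ⬝ᵥ v := by rw [dotProduct_mulVec, mulVec_transpose]
    _ = -(v ⬝ᵥ A *ᵥ v) := by rw [hA, neg_mulVec, neg_dotProduct, dotProduct_comm]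

namespace IsPolyMap

variable {d k : ℕ} {y : ℝ → Fin d → ℝ}

theorem contDiff (hy : IsPolyMap k y) (n : WithTop ℕ∞) : ContDiff ℝ n y := by
  refine contDiff_pi.2 fun i => ?_
  obtain ⟨q, -, hq⟩ := hy i
  simpa [funext hq] using q.contDiff_aeval (𝕜 := ℝ) n

protected theorem deriv (hy : IsPolyMap k y) : IsPolyMap (k - 1) (deriv y) := by
  intro i
  obtain ⟨q, hqk, hq⟩ := hy i
  refine ⟨Polynomial.derivative q,
    (Polynomial.natDegree_derivative_le q).trans (Nat.sub_le_sub_right hqk 1), fun t => ?_⟩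
  have hdiff : ∀ j, DifferentiableAt ℝ (fun u => y u j) t := fun j =>
    differentiableAt_pi.1 ((hy.contDiff 1).differentiable one_ne_zero t) j
  rw [deriv_pi hdiff]
  change deriv (fun u => y u i) t = _
  rw [funext hq, Polynomial.deriv]

end IsPolyMap

theorem integral_dotProduct_deriv_eq_sub {d : ℕ} {H : (Fin d → ℝ) → ℝ}
    {gH : (Fin d → ℝ) → Fin d → ℝ} (hH : ∀ z, HasFDerivAt H (dotCLM (gH z)) z)
    (hgH : Continuous gH) {x : ℝ → Fin d → ℝ} (hx : ContDiff ℝ 1 x) (a b : ℝ) :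
    ∫ t in a..b, gH (x t) ⬝ᵥ deriv x t = H (x b) - H (x a) :=
  intervalIntegral.integral_eq_sub_of_hasDerivAt
    (fun t _ => (hH (x t)).comp_hasDerivAt t (hx.differentiable one_ne_zero t).hasDerivAt)
    (((hgH.comp hx.continuous).dotProduct hx.continuous_deriv_one).intervalIntegrable a b)

theorem poisson_scheme_conserves_H_general
    (d s : ℕ) (a b : ℝ)
    (I : (ℝ → ℝ) →ₗ[ℝ] ℝ)
    (H : (Fin d → ℝ) → ℝ) (gH : (Fin d → ℝ) → (Fin d → ℝ))
    (hH : ∀ z, HasFDerivAt H (dotCLM (gH z)) z)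
    (hgH : Continuous gH)
    (B : (Fin d → ℝ) → Matrix (Fin d) (Fin d) ℝ)
    (hB : ∀ z, (B z)ᵀ = -(B z))
    (x : ℝ → Fin d → ℝ) (hx : IsPolyMap s x)
    (g : ℝ → Fin d → ℝ) (hg : IsPolyMap (s - 1) g)
    (h1 : ∀ y : ℝ → Fin d → ℝ, IsPolyMap (s - 1) y →
      I (fun t => y t ⬝ᵥ deriv x t) = I (fun t => y t ⬝ᵥ (B (x t)).mulVec (g t)))
    (h2 : ∀ y₀ : ℝ → Fin d → ℝ, IsPolyMap (s - 1) y₀ →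
      I (fun t => g t ⬝ᵥ y₀ t) = ∫ t in a..b, gH (x t) ⬝ᵥ y₀ t) :
    H (x b) = H (x a) := by
  have h_skew : I (fun t => g t ⬝ᵥ deriv x t) = 0 := by
    rw [h1 g hg]
    simp_rw [dotProduct_mulVec_self_eq_zero_of_transpose_eq_neg (hB _)]
    exact map_zero I
  rw [← sub_eq_zero, ← integral_dotProduct_deriv_eq_sub hH hgH (hx.contDiff 1), ← h2 _ hx.deriv,
    h_skew]

/-- Proposition 2.1: the auxiliary-variable discretisation of the
Poisson system `ẋ = B(x) ∇H(x)` conserves the Hamiltonian `H` over the timestep `[a, b]`. -/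
theorem poisson_scheme_conserves_H
    (d s : ℕ) (hd : 1 ≤ d) (hs : 1 ≤ s) (a b : ℝ) (hab : a < b)
    (I : (ℝ → ℝ) →ₗ[ℝ] ℝ)
    (H : (Fin d → ℝ) → ℝ) (gH : (Fin d → ℝ) → (Fin d → ℝ))
    (hH : ∀ z, HasFDerivAt H (dotCLM (gH z)) z)
    (hgH : Continuous gH)
    (B : (Fin d → ℝ) → Matrix (Fin d) (Fin d) ℝ)
    (hB : ∀ z, (B z)ᵀ = -(B z))
    (x : ℝ → Fin d → ℝ) (hx : IsPolyMap s x)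
    (g : ℝ → Fin d → ℝ) (hg : IsPolyMap (s - 1) g)
    (h1 : ∀ y : ℝ → Fin d → ℝ, IsPolyMap (s - 1) y →
      I (fun t => y t ⬝ᵥ deriv x t) = I (fun t => y t ⬝ᵥ (B (x t)).mulVec (g t)))
    (h2 : ∀ y₀ : ℝ → Fin d → ℝ, IsPolyMap (s - 1) y₀ →
      I (fun t => g t ⬝ᵥ y₀ t) = ∫ t in a..b, gH (x t) ⬝ᵥ y₀ t) :
    H (x b) = H (x a) :=
  poisson_scheme_conserves_H_general d s a b I H gH hH hgH B hB x hx g hg h1 h2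
end

section
/- Let d ≥ 1 and 1 ≤ P < d. Let v₁, …, v_P ∈ ℝ^d be linearly independent and let f ∈ ℝ^d satisfy v_pᵀ f = 0 for each p = 1, …, P. Then there exists an alternating (P+1)-multilinear form F : (ℝ^d)^{P+1} → ℝ such that F(v₁, …, v_P, y) = yᵀ f for every y ∈ ℝ^d. -/
/-!
Choose functionals `φ₁, …, φ_P` with `φ_p(v_q) = δ_pq`, put
`ψ y = yᵀ f`, and let `F(x₀, …, x_P) = det (φ₁, …, φ_P, ψ)(x_j)`. At `(v₁, …, v_P, y)` this
matrix is upper triangular, because `ψ(v_q) = 0`, with diagonal `1, …, 1, ψ y`.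
-/

open Matrix

theorem LinearIndependent.exists_pairwise_dual_eq_zero_one {K V ι : Type*} [Field K]
    [AddCommGroup V] [Module K V] {v : ι → V} (hv : LinearIndependent K v) :
    ∃ φ : ι → Module.Dual K V, Pairwise (fun i j ↦ φ i (v j) = 0) ∧ ∀ i, φ i (v i) = 1 := by
  classical
  obtain ⟨g, hg⟩ := (Finsupp.linearCombination K v).exists_leftInverse_of_injective
    (LinearMap.ker_eq_bot.mpr hv)
  have hgv (j : ι) : g (v j) = Finsupp.single j 1 := by
    simpa using LinearMap.congr_fun hg (Finsupp.single j 1)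
  refine ⟨fun i ↦ Finsupp.lapply i ∘ₗ g, fun i j hij ↦ ?_, fun i ↦ ?_⟩
  · simp [hgv, hij.symm]
  · simp [hgv]

section DualDet

variable {R M ι : Type*} [CommRing R] [AddCommGroup M] [Module R M] [Fintype ι] [DecidableEq ι]

noncomputable def Module.Dual.det (φ : ι → Module.Dual R M) : M [⋀^ι]→ₗ[R] R :=
  (Pi.basisFun R ι).det.compLinearMap (LinearMap.pi φ)

theorem Module.Dual.det_apply (φ : ι → Module.Dual R M) (x : ι → M) :
    Module.Dual.det φ x = (Matrix.of fun i j ↦ φ i (x j)).det := by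
  rw [Module.Dual.det, AlternatingMap.compLinearMap_apply, Module.Basis.det_apply]
  rfl

end DualDet

theorem LinearIndependent.exists_alternatingMap_snoc_eq {K V : Type*} [Field K]
    [AddCommGroup V] [Module K V] {n : ℕ} {v : Fin n → V} (hv : LinearIndependent K v)
    (ψ : Module.Dual K V) (hψ : ∀ i, ψ (v i) = 0) :
    ∃ F : V [⋀^Fin (n + 1)]→ₗ[K] K, ∀ y, F (Fin.snoc v y) = ψ y := by
  obtain ⟨φ, hφ₀, hφ₁⟩ := hv.exists_pairwise_dual_eq_zero_one
  refine ⟨Module.Dual.det (Fin.snoc φ ψ), fun y ↦ ?_⟩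
  have hupper : (Matrix.of fun i j ↦ (Fin.snoc φ ψ : Fin (n + 1) → _) i
      ((Fin.snoc v y : Fin (n + 1) → V) j)).IsUpperTriangular := by
    intro i j hji
    induction i using Fin.lastCases with
    | last =>
      induction j using Fin.lastCases with
      | last => simp at hji
      | cast j => simp [hψ]
    | cast i =>
      induction j using Fin.lastCases with
      | last => exact absurd hji (Fin.castSucc_lt_last i).not_gt
      | cast j => simp [hφ₀ (Fin.castSucc_lt_castSucc_iff.mp hji).ne']
  rw [Module.Dual.det_apply, det_of_isUpperTriangular hupper, Fin.prod_univ_castSucc]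
  simp [hφ₁]

theorem exists_alternating_form_representation_general
    (d P : ℕ)
    (v : Fin P → (Fin d → ℝ)) (hv : LinearIndependent ℝ v)
    (f : Fin d → ℝ) (hf : ∀ p : Fin P, v p ⬝ᵥ f = 0) :
    ∃ F : AlternatingMap ℝ (Fin d → ℝ) ℝ (Fin (P + 1)),
      ∀ y : Fin d → ℝ, F (Fin.snoc v y) = y ⬝ᵥ f :=
  hv.exists_alternatingMap_snoc_eq ((dotProductBilin ℝ ℝ).flip f) hf

/-- pointwise content of Theorem 2.2: if `v₁, …, v_P ∈ ℝ^d` are linearly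
independent and `f ∈ ℝ^d` is orthogonal to each `v_p`, then there is an alternating
`(P+1)`-multilinear form `F` on `ℝ^d` with `F(v₁, …, v_P, y) = yᵀ f` for all `y`. -/
theorem exists_alternating_form_representation
    (d P : ℕ) (hP : 1 ≤ P) (hPd : P < d)
    (v : Fin P → (Fin d → ℝ)) (hv : LinearIndependent ℝ v)
    (f : Fin d → ℝ) (hf : ∀ p : Fin P, v p ⬝ᵥ f = 0) :
    ∃ F : AlternatingMap ℝ (Fin d → ℝ) ℝ (Fin (P + 1)),
      ∀ y : Fin d → ℝ, F (Fin.snoc v y) = y ⬝ᵥ f :=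
  exists_alternating_form_representation_general d P v hv f hf
end

section
/- Let x, v : ℝ → ℝ³ be differentiable on an interval [a, b] with x(t) ≠ 0 for all t ∈ [a, b], satisfying the Kepler problem ẋ = v, v̇ = −x/‖x‖³ on [a, b]. Then the Runge–Lenz vector A(x(t), v(t)) = v(t) × (x(t) × v(t)) − x(t)/‖x(t)‖ is constant on [a, b]. -/
/-!
For a central force `v̇ = c • x` the angular momentum `L = x × v` is conserved. Hence
`d/dt (v × L) = v̇ × L = -‖x‖⁻³ • x × (x × v) = ‖x‖⁻¹ • v - ‖x‖⁻³ (x ⬝ v) • x`, which is exactly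
the derivative of `x / ‖x‖`.
-/

open Matrix

/-- The Euclidean norm on `Fin n → ℝ`. -/
noncomputable def eucNorm {n : ℕ} (x : Fin n → ℝ) : ℝ := Real.sqrt (∑ i, x i ^ 2)

theorem HasDerivAt.crossProduct {f g : ℝ → Fin 3 → ℝ} {f' g' : Fin 3 → ℝ} {t : ℝ}
    (hf : HasDerivAt f f' t) (hg : HasDerivAt g g' t) :
    HasDerivAt (fun s => f s ⨯₃ g s) (f t ⨯₃ g' + f' ⨯₃ g t) t :=
  (_root_.crossProduct : (Fin 3 → ℝ) →ₗ[ℝ] _ →ₗ[ℝ] _).toContinuousBilinearMap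
    |>.hasDerivAt_of_bilinear (fun _ => hf) (fun _ => hg)

theorem HasDerivAt.dotProduct {ι : Type*} [Fintype ι] {f g : ℝ → ι → ℝ} {f' g' : ι → ℝ}
    {t : ℝ} (hf : HasDerivAt f f' t) (hg : HasDerivAt g g' t) :
    HasDerivAt (fun s => f s ⬝ᵥ g s) (f t ⬝ᵥ g' + f' ⬝ᵥ g t) t :=
  (dotProductBilin ℝ ℝ : (ι → ℝ) →ₗ[ℝ] _ →ₗ[ℝ] ℝ).toContinuousBilinearMap
    |>.hasDerivAt_of_bilinear (fun _ => hf) (fun _ => hg)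

section eucNorm

variable {n : ℕ}

theorem eucNorm_eq_sqrt_dotProduct (x : Fin n → ℝ) : eucNorm x = √(x ⬝ᵥ x) := by
  simp only [eucNorm, dotProduct, sq]

theorem sq_eucNorm (x : Fin n → ℝ) : eucNorm x ^ 2 = x ⬝ᵥ x := by
  rw [eucNorm_eq_sqrt_dotProduct, Real.sq_sqrt (by simpa using dotProduct_self_star_nonneg x)]

theorem eucNorm_pos {x : Fin n → ℝ} (hx : x ≠ 0) : 0 < eucNorm x := by
  rw [eucNorm_eq_sqrt_dotProduct, Real.sqrt_pos]
  exact (by simpa using dotProduct_self_star_nonneg x : 0 ≤ x ⬝ᵥ x).lt_of_ne'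
    (dotProduct_self_eq_zero.not.mpr hx)

theorem HasDerivAt.eucNorm_inv {f : ℝ → Fin n → ℝ} {f' : Fin n → ℝ} {t : ℝ}
    (hf : HasDerivAt f f' t) (h0 : f t ≠ 0) :
    HasDerivAt (fun s => (eucNorm (f s))⁻¹) (-(f t ⬝ᵥ f') / eucNorm (f t) ^ 3) t := by
  have hr := (eucNorm_pos h0).ne'
  have hsqrt := (hf.dotProduct hf).sqrt (by rw [← sq_eucNorm]; positivity)
  simp only [← eucNorm_eq_sqrt_dotProduct, dotProduct_comm f'] at hsqrt
  refine (hsqrt.inv hr).congr_deriv ?_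
  rw [← two_mul]
  field_simp

end eucNorm

theorem hasDerivAt_crossProduct_eq_zero_of_central {x v : ℝ → Fin 3 → ℝ} {c t : ℝ}
    (hx : HasDerivAt x (v t) t) (hv : HasDerivAt v (c • x t) t) :
    HasDerivAt (fun s => x s ⨯₃ v s) 0 t := by
  simpa [cross_self] using hx.crossProduct hv

noncomputable def rungeLenz (x v : Fin 3 → ℝ) : Fin 3 → ℝ := v ⨯₃ (x ⨯₃ v) - (eucNorm x)⁻¹ • x

theorem hasDerivAt_rungeLenz_of_kepler {x v : ℝ → Fin 3 → ℝ} {t : ℝ} (hx0 : x t ≠ 0)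
    (hx : HasDerivAt x (v t) t) (hv : HasDerivAt v (-(eucNorm (x t) ^ 3)⁻¹ • x t) t) :
    HasDerivAt (fun s => rungeLenz (x s) (v s)) 0 t := by
  have hr := (eucNorm_pos hx0).ne'
  refine ((hv.crossProduct (hasDerivAt_crossProduct_eq_zero_of_central hx hv)).fun_sub
    ((hx.eucNorm_inv hx0).fun_smul hx)).congr_deriv ?_
  rw [map_zero, zero_add, map_smul, LinearMap.smul_apply, cross_cross_eq_smul_sub_smul',
    ← sq_eucNorm]
  ext i
  simp only [Pi.zero_apply, Pi.sub_apply, Pi.add_apply, Pi.smul_apply, smul_eq_mul]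
  field_simp
  ring

theorem kepler_runge_lenz_conserved_general
    (a b : ℝ) (x v : ℝ → Fin 3 → ℝ)
    (hx0 : ∀ t ∈ Set.Icc a b, x t ≠ 0)
    (hx : ∀ t ∈ Set.Icc a b, HasDerivAt x (v t) t)
    (hv : ∀ t ∈ Set.Icc a b, HasDerivAt v (-(eucNorm (x t) ^ 3)⁻¹ • x t) t) :
    ∀ t ∈ Set.Icc a b,
      crossProduct (v t) (crossProduct (x t) (v t)) - (eucNorm (x t))⁻¹ • x t
        = crossProduct (v a) (crossProduct (x a) (v a)) - (eucNorm (x a))⁻¹ • x a := by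
  have hA : ∀ t ∈ Set.Icc a b, HasDerivAt (fun s => rungeLenz (x s) (v s)) 0 t :=
    fun t ht => hasDerivAt_rungeLenz_of_kepler (hx0 t ht) (hx t ht) (hv t ht)
  exact constant_of_has_deriv_right_zero (fun t ht => (hA t ht).continuousAt.continuousWithinAt)
    fun t ht => (hA t (Set.Ico_subset_Icc_self ht)).hasDerivWithinAt

/-- along solutions of the Kepler problem `ẋ = v`, `v̇ = -x/‖x‖³` on `[a, b]`
(with `x(t) ≠ 0`), the Runge–Lenz vector `A = v × (x × v) − x/‖x‖` is constant. -/
theorem kepler_runge_lenz_conserved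
    (a b : ℝ) (hab : a ≤ b) (x v : ℝ → Fin 3 → ℝ)
    (hx0 : ∀ t ∈ Set.Icc a b, x t ≠ 0)
    (hx : ∀ t ∈ Set.Icc a b, HasDerivAt x (v t) t)
    (hv : ∀ t ∈ Set.Icc a b, HasDerivAt v (-(eucNorm (x t) ^ 3)⁻¹ • x t) t) :
    ∀ t ∈ Set.Icc a b,
      crossProduct (v t) (crossProduct (x t) (v t)) - (eucNorm (x t))⁻¹ • x t
        = crossProduct (v a) (crossProduct (x a) (v a)) - (eucNorm (x a))⁻¹ • x a :=
  kepler_runge_lenz_conserved_general a b x v hx0 hx hv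
end

section
/- Let J be the 3×3 diagonal matrix with diagonal (1, 1, 2), and let e₁ = (1, 0, 0) ∈ ℝ³. Let n, l : ℝ → ℝ³ be differentiable on an interval [a, b] satisfying the Kovalevskaya top equations ṅ = n × (J l), l̇ = n × e₁ + l × (J l) on [a, b], where × denotes the cross product. Then the Kovalevskaya invariant K = (l₁² − l₂² − 2n₁)² + (2 l₁ l₂ − 2 n₂)², where l = (l₁, l₂, l₃) and n = (n₁, n₂, n₃), is constant on [a, b]. -/
open Matrix

/-!
In complex notation `z = l₁ + i l₂`, `w = n₁ + i n₂`, the equations of motion give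
`ż = -i l₃ z + i n₃` and `ẇ = -2i l₃ w + i n₃ z`, so `ξ = z² - 2w` satisfies `ξ̇ = -2i l₃ ξ`.
A velocity `i c ξ` is orthogonal to `ξ`, hence `K = |ξ|²` has zero derivative.
-/

open Complex

theorem hasDerivAt_norm_sq_of_hasDerivAt_I_mul {f : ℝ → ℂ} {c t : ℝ}
    (hf : HasDerivAt f (I * c * f t) t) : HasDerivAt (fun s => ‖f s‖ ^ 2) 0 t := by
  have horth : inner ℝ (f t) (I * c * f t) = 0 := by
    rw [Complex.inner, mul_assoc, mul_conj]
    simp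
  simpa [horth] using hf.norm_sq

theorem norm_sq_eq_of_hasDerivAt_I_mul {f : ℝ → ℂ} {c : ℝ → ℝ} {a b : ℝ}
    (hf : ∀ t ∈ Set.Icc a b, HasDerivAt f (I * c t * f t) t) :
    ∀ t ∈ Set.Icc a b, ‖f t‖ ^ 2 = ‖f a‖ ^ 2 :=
  constant_of_has_deriv_right_zero
    (fun t ht => (hasDerivAt_norm_sq_of_hasDerivAt_I_mul (hf t ht)).continuousAt.continuousWithinAt)
    (fun t ht =>
      (hasDerivAt_norm_sq_of_hasDerivAt_I_mul (hf t (Set.Ico_subset_Icc_self ht))).hasDerivWithinAt)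

noncomputable def kovalevskayaXi (n l : ℝ → Fin 3 → ℝ) (t : ℝ) : ℂ :=
  (l t 0 + l t 1 * I) ^ 2 - 2 * (n t 0 + n t 1 * I)

theorem norm_kovalevskayaXi_sq (n l : ℝ → Fin 3 → ℝ) (t : ℝ) :
    ‖kovalevskayaXi n l t‖ ^ 2
      = (l t 0 ^ 2 - l t 1 ^ 2 - 2 * n t 0) ^ 2 + (2 * l t 0 * l t 1 - 2 * n t 1) ^ 2 := by
  rw [← normSq_eq_norm_sq, normSq_apply]
  simp [kovalevskayaXi, pow_two]
  ring

theorem hasDerivAt_kovalevskayaXi {n l : ℝ → Fin 3 → ℝ} {t : ℝ}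
    (hn : HasDerivAt n (crossProduct (n t) ((Matrix.diagonal ![1, 1, 2]).mulVec (l t))) t)
    (hl : HasDerivAt l (crossProduct (n t) ![1, 0, 0]
        + crossProduct (l t) ((Matrix.diagonal ![1, 1, 2]).mulVec (l t))) t) :
    HasDerivAt (kovalevskayaXi n l) (I * (-2 * l t 2 : ℝ) * kovalevskayaXi n l t) t := by
  have hl₁ : HasDerivAt (fun s => l s 0) (l t 1 * l t 2) t :=
    (hasDerivAt_pi.mp hl 0).congr_deriv (by simp [cross_apply, mulVec, diagonal, dotProduct]; ring)
  have hl₂ : HasDerivAt (fun s => l s 1) (n t 2 - l t 0 * l t 2) t :=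
    (hasDerivAt_pi.mp hl 1).congr_deriv (by simp [cross_apply, mulVec, diagonal, dotProduct]; ring)
  have hn₁ : HasDerivAt (fun s => n s 0) (2 * n t 1 * l t 2 - n t 2 * l t 1) t :=
    (hasDerivAt_pi.mp hn 0).congr_deriv (by simp [cross_apply, mulVec, diagonal, dotProduct]; ring)
  have hn₂ : HasDerivAt (fun s => n s 1) (n t 2 * l t 0 - 2 * n t 0 * l t 2) t :=
    (hasDerivAt_pi.mp hn 1).congr_deriv (by simp [cross_apply, mulVec, diagonal, dotProduct]; ring)
  set z : ℂ := l t 0 + l t 1 * I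
  set w : ℂ := n t 0 + n t 1 * I
  have hz : HasDerivAt (fun s => (l s 0 : ℂ) + l s 1 * I) (-I * l t 2 * z + I * n t 2) t :=
    (hl₁.ofReal_comp.add (hl₂.ofReal_comp.mul_const I)).congr_deriv <| by
      push_cast
      linear_combination (l t 1 * l t 2) * I_sq
  have hw : HasDerivAt (fun s => (n s 0 : ℂ) + n s 1 * I)
      (-2 * I * l t 2 * w + I * n t 2 * z) t :=
    (hn₁.ofReal_comp.add (hn₂.ofReal_comp.mul_const I)).congr_deriv <| by
      push_cast
      linear_combination (2 * n t 1 * l t 2 - n t 2 * l t 1) * I_sq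
  exact ((hz.pow 2).sub (hw.const_mul 2)).congr_deriv (by simp [kovalevskayaXi]; ring)

theorem kovalevskaya_invariant_conserved_general
    (a b : ℝ) (n l : ℝ → Fin 3 → ℝ)
    (hn : ∀ t ∈ Set.Icc a b,
      HasDerivAt n (crossProduct (n t) ((Matrix.diagonal ![1, 1, 2]).mulVec (l t))) t)
    (hl : ∀ t ∈ Set.Icc a b,
      HasDerivAt l (crossProduct (n t) ![1, 0, 0]
        + crossProduct (l t) ((Matrix.diagonal ![1, 1, 2]).mulVec (l t))) t) :
    ∀ t ∈ Set.Icc a b,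
      (l t 0 ^ 2 - l t 1 ^ 2 - 2 * n t 0) ^ 2 + (2 * l t 0 * l t 1 - 2 * n t 1) ^ 2
        = (l a 0 ^ 2 - l a 1 ^ 2 - 2 * n a 0) ^ 2 + (2 * l a 0 * l a 1 - 2 * n a 1) ^ 2 := by
  intro t ht
  rw [← norm_kovalevskayaXi_sq, ← norm_kovalevskayaXi_sq]
  exact norm_sq_eq_of_hasDerivAt_I_mul
    (fun s hs => hasDerivAt_kovalevskayaXi (hn s hs) (hl s hs)) t ht

/-- along solutions of the Kovalevskaya top
`ṅ = n × (J l)`, `l̇ = n × e₁ + l × (J l)` with `J = diag(1,1,2)`, the Kovalevskaya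
invariant `K = (l₁² − l₂² − 2n₁)² + (2 l₁ l₂ − 2 n₂)²` is constant on `[a, b]`. -/
theorem kovalevskaya_invariant_conserved
    (a b : ℝ) (hab : a ≤ b) (n l : ℝ → Fin 3 → ℝ)
    (hn : ∀ t ∈ Set.Icc a b,
      HasDerivAt n (crossProduct (n t) ((Matrix.diagonal ![1, 1, 2]).mulVec (l t))) t)
    (hl : ∀ t ∈ Set.Icc a b,
      HasDerivAt l (crossProduct (n t) ![1, 0, 0]
        + crossProduct (l t) ((Matrix.diagonal ![1, 1, 2]).mulVec (l t))) t) :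
    ∀ t ∈ Set.Icc a b,
      (l t 0 ^ 2 - l t 1 ^ 2 - 2 * n t 0) ^ 2 + (2 * l t 0 * l t 1 - 2 * n t 1) ^ 2
        = (l a 0 ^ 2 - l a 1 ^ 2 - 2 * n a 0) ^ 2 + (2 * l a 0 * l a 1 - 2 * n a 1) ^ 2 :=
  kovalevskaya_invariant_conserved_general a b n l hn hl
end

section
/- Let C ≥ 1, let T₀ > 0, and let T₁, …, T_C > 0. Define the (C+3)×(C+3) real matrix D by: the first two rows and first two columns are zero; for c = 1, …, C, the diagonal entry in position (c+2, c+2) is T₀/T_c; the entries in position (c+2, C+3) and (C+3, c+2) are −1 for each c = 1, …, C; the entry in position (C+3, C+3) is Σ_{c=1}^C T_c/T₀; and all other entries are zero. Then: (i) D is positive semidefinite, i.e. vᵀ D v ≥ 0 for every v ∈ ℝ^{C+3}; and (ii) for any a, b ∈ ℝ, the vector g = (a, b, T₁, …, T_C, T₀)ᵀ satisfies gᵀ D = 0. -/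
/-!
The friction matrix is a sum of rank-one relaxation terms, one per cylinder:
`D = ∑_c (T₀ / T_c) u_c u_cᵀ` with `u_c = e_{S_c} − (T_c / T₀) e_{S₀}`.
With positive weights this is positive semidefinite, and `∇E` is orthogonal to every `u_c`
because `T_c − (T_c / T₀) T₀ = 0`, so `∇Eᵀ D = ∑_c (T₀ / T_c) (∇E ⬝ u_c) u_cᵀ = 0`.
-/

open Matrix

namespace Matrix

variable {ι n R : Type*} [Fintype n]

theorem posSemidef_sum_smul_vecMulVec_self [CommRing R] [PartialOrder R] [StarRing R]
    [StarOrderedRing R] [TrivialStar R] (s : Finset ι) {w : ι → R} (hw : ∀ i ∈ s, 0 ≤ w i)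
    (u : ι → n → R) : (∑ i ∈ s, w i • vecMulVec (u i) (u i)).PosSemidef := by
  refine posSemidef_sum s fun i hi => PosSemidef.smul ?_ (hw i hi)
  simpa using posSemidef_vecMulVec_self_star (u i)

theorem vecMul_sum_smul_vecMulVec_self_eq_zero [CommRing R] (s : Finset ι) (w : ι → R)
    {u : ι → n → R} {g : n → R} (hg : ∀ i ∈ s, g ⬝ᵥ u i = 0) :
    g ᵥ* ∑ i ∈ s, w i • vecMulVec (u i) (u i) = 0 := by
  rw [vecMul_sum]
  refine Finset.sum_eq_zero fun i hi => ?_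
  rw [vecMul_smul, vecMul_vecMulVec, hg i hi, zero_smul, smul_zero]

end Matrix

namespace CombustionEngine

variable {C : ℕ}

/-- The position of `S_c` in the state `(θ, ω, S₁, …, S_C, S₀)`, with `S₀` at `Fin.last`. -/
def cylinderIndex (c : Fin C) : Fin (C + 3) := (c.addNat 2).castLE (Nat.le_add_right _ 1)

@[simp] theorem val_cylinderIndex (c : Fin C) : (cylinderIndex c).val = c.val + 2 := rfl

theorem cylinderIndex_injective : Function.Injective (cylinderIndex (C := C)) :=
  fun a b h => Fin.ext (by simpa using congrArg Fin.val h)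

theorem cylinderIndex_ne_last (c : Fin C) : cylinderIndex c ≠ Fin.last (C + 2) :=
  Fin.ne_of_val_ne (by simp; omega)

theorem exists_cylinderIndex_or_eq_last {i : Fin (C + 3)} (hi : 2 ≤ i.val) :
    (∃ c, i = cylinderIndex c) ∨ i = Fin.last (C + 2) := by
  by_cases hC : i.val < C + 2
  · exact Or.inl ⟨⟨i.val - 2, by omega⟩, Fin.ext (by simp; omega)⟩
  · exact Or.inr (Fin.ext (by simp; omega))

noncomputable def relaxationDirection (T₀ : ℝ) (T : Fin C → ℝ) (c : Fin C) : Fin (C + 3) → ℝ :=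
  Pi.single (cylinderIndex c) 1 - (T c / T₀) • Pi.single (Fin.last (C + 2)) 1

noncomputable def frictionMatrix (T₀ : ℝ) (T : Fin C → ℝ) : Matrix (Fin (C + 3)) (Fin (C + 3)) ℝ :=
  ∑ c, (T₀ / T c) • vecMulVec (relaxationDirection T₀ T c) (relaxationDirection T₀ T c)

variable {T₀ : ℝ} {T : Fin C → ℝ}

theorem relaxationDirection_of_lt_two (c : Fin C) {i : Fin (C + 3)} (hi : i.val < 2) :
    relaxationDirection T₀ T c i = 0 := by
  have h₁ : i ≠ cylinderIndex c := fun h => by simp [h] at hi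
  have h₂ : i ≠ Fin.last (C + 2) := fun h => by simp [h] at hi
  simp [relaxationDirection, h₁, h₂]

theorem relaxationDirection_cylinderIndex (c a : Fin C) :
    relaxationDirection T₀ T c (cylinderIndex a) = if a = c then 1 else 0 := by
  simp [relaxationDirection, cylinderIndex_injective.eq_iff, cylinderIndex_ne_last, Pi.single_apply]

theorem relaxationDirection_last (c : Fin C) :
    relaxationDirection T₀ T c (Fin.last (C + 2)) = -(T c / T₀) := by
  simp [relaxationDirection, (cylinderIndex_ne_last c).symm]

theorem dotProduct_relaxationDirection (g : Fin (C + 3) → ℝ) (c : Fin C) :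
    g ⬝ᵥ relaxationDirection T₀ T c = g (cylinderIndex c) - T c / T₀ * g (Fin.last (C + 2)) := by
  simp [relaxationDirection, dotProduct_sub]

theorem frictionMatrix_apply (i j : Fin (C + 3)) :
    frictionMatrix T₀ T i j =
      ∑ c, T₀ / T c * (relaxationDirection T₀ T c i * relaxationDirection T₀ T c j) := by
  simp [frictionMatrix, Matrix.sum_apply, vecMulVec_apply]

theorem frictionMatrix_apply_of_lt_two {i j : Fin (C + 3)} (h : i.val < 2 ∨ j.val < 2) :
    frictionMatrix T₀ T i j = 0 := by
  rw [frictionMatrix_apply]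
  rcases h with h | h <;> simp [relaxationDirection_of_lt_two _ h]

theorem frictionMatrix_cylinderIndex_cylinderIndex (a b : Fin C) :
    frictionMatrix T₀ T (cylinderIndex a) (cylinderIndex b) = if a = b then T₀ / T a else 0 := by
  by_cases hab : a = b
  · subst hab
    simp [frictionMatrix_apply, relaxationDirection_cylinderIndex]
  · simp [frictionMatrix_apply, relaxationDirection_cylinderIndex, hab]

theorem frictionMatrix_cylinderIndex_last (hT₀ : T₀ ≠ 0) {a : Fin C} (ha : T a ≠ 0) :
    frictionMatrix T₀ T (cylinderIndex a) (Fin.last (C + 2)) = -1 := by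
  simp only [frictionMatrix_apply, relaxationDirection_cylinderIndex, relaxationDirection_last,
    mul_neg, ite_mul, one_mul, zero_mul, mul_ite, mul_zero, Finset.sum_neg_distrib,
    Finset.sum_ite_eq, Finset.mem_univ, ↓reduceIte, neg_inj]
  field_simp

theorem frictionMatrix_last_cylinderIndex (hT₀ : T₀ ≠ 0) {a : Fin C} (ha : T a ≠ 0) :
    frictionMatrix T₀ T (Fin.last (C + 2)) (cylinderIndex a) = -1 := by
  simp only [frictionMatrix_apply, relaxationDirection_last, relaxationDirection_cylinderIndex,
    mul_ite, mul_one, mul_zero, mul_neg, Finset.sum_ite_eq, Finset.mem_univ, ↓reduceIte, neg_inj]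
  field_simp

theorem frictionMatrix_last_last (hT₀ : T₀ ≠ 0) (hT : ∀ c, T c ≠ 0) :
    frictionMatrix T₀ T (Fin.last (C + 2)) (Fin.last (C + 2)) = ∑ c, T c / T₀ := by
  refine (frictionMatrix_apply _ _).trans (Finset.sum_congr rfl fun c _ => ?_)
  rw [relaxationDirection_last]
  field_simp [hT c]

theorem eq_frictionMatrix {D : Matrix (Fin (C + 3)) (Fin (C + 3)) ℝ}
    (hT₀ : T₀ ≠ 0) (hT : ∀ c, T c ≠ 0)
    (hzero : ∀ i j : Fin (C + 3), i.val < 2 ∨ j.val < 2 → D i j = 0)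
    (hdiag : ∀ c, D (cylinderIndex c) (cylinderIndex c) = T₀ / T c)
    (hoffdiag : ∀ c c', c ≠ c' → D (cylinderIndex c) (cylinderIndex c') = 0)
    (hlastcol : ∀ c, D (cylinderIndex c) (Fin.last (C + 2)) = -1)
    (hlastrow : ∀ c, D (Fin.last (C + 2)) (cylinderIndex c) = -1)
    (hcorner : D (Fin.last (C + 2)) (Fin.last (C + 2)) = ∑ c, T c / T₀) :
    D = frictionMatrix T₀ T := by
  ext i j
  by_cases hij : i.val < 2 ∨ j.val < 2
  · rw [hzero i j hij, frictionMatrix_apply_of_lt_two hij]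
  obtain ⟨hi, hj⟩ := not_or.1 hij
  rcases exists_cylinderIndex_or_eq_last (not_lt.1 hi) with ⟨a, rfl⟩ | rfl <;>
    rcases exists_cylinderIndex_or_eq_last (not_lt.1 hj) with ⟨b, rfl⟩ | rfl
  · rw [frictionMatrix_cylinderIndex_cylinderIndex]
    split_ifs with hab
    · rw [hab, hdiag]
    · exact hoffdiag a b hab
  · rw [hlastcol, frictionMatrix_cylinderIndex_last hT₀ (hT a)]
  · rw [hlastrow, frictionMatrix_last_cylinderIndex hT₀ (hT b)]
  · rw [hcorner, frictionMatrix_last_last hT₀ hT]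

theorem posSemidef_frictionMatrix (hT₀ : 0 ≤ T₀) (hT : ∀ c, 0 ≤ T c) :
    (frictionMatrix T₀ T).PosSemidef :=
  posSemidef_sum_smul_vecMulVec_self _ (fun c _ => div_nonneg hT₀ (hT c)) _

theorem vecMul_frictionMatrix_eq_zero (hT₀ : T₀ ≠ 0) {g : Fin (C + 3) → ℝ}
    (hg : ∀ c, g (cylinderIndex c) = T c) (hg₀ : g (Fin.last (C + 2)) = T₀) :
    g ᵥ* frictionMatrix T₀ T = 0 := by
  refine vecMul_sum_smul_vecMulVec_self_eq_zero _ _ fun c _ => ?_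
  rw [dotProduct_relaxationDirection, hg, hg₀, div_mul_cancel₀ _ hT₀, sub_self]

end CombustionEngine

open CombustionEngine in
/-- the friction matrix `D` of the `C`-cylinder combustion engine model
(first two rows/columns zero; diagonal thermal block `T₀/T_c`; coupling `−1` between each
cylinder and the environment; corner entry `Σ_c T_c/T₀`) is positive semidefinite, and the
energy-gradient vector `g = (a, b, T₁, …, T_C, T₀)ᵀ` satisfies `gᵀ D = 0`. -/
theorem engine_friction_matrix_psd_and_degenerate
    (C : ℕ) (hC : 1 ≤ C) (T₀ : ℝ) (hT₀ : 0 < T₀) (T : Fin C → ℝ) (hT : ∀ c, 0 < T c)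
    (D : Matrix (Fin (C + 3)) (Fin (C + 3)) ℝ)
    (hzero : ∀ i j : Fin (C + 3), i.val < 2 ∨ j.val < 2 → D i j = 0)
    (hdiag : ∀ c : Fin C,
      D ((c.addNat 2).castLE (by omega)) ((c.addNat 2).castLE (by omega)) = T₀ / T c)
    (hoffdiag : ∀ c c' : Fin C, c ≠ c' →
      D ((c.addNat 2).castLE (by omega)) ((c'.addNat 2).castLE (by omega)) = 0)
    (hlastcol : ∀ c : Fin C,
      D ((c.addNat 2).castLE (by omega)) (Fin.last (C + 2)) = -1)
    (hlastrow : ∀ c : Fin C,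
      D (Fin.last (C + 2)) ((c.addNat 2).castLE (by omega)) = -1)
    (hcorner : D (Fin.last (C + 2)) (Fin.last (C + 2)) = ∑ c, T c / T₀) :
    (∀ v : Fin (C + 3) → ℝ, 0 ≤ v ⬝ᵥ D.mulVec v) ∧
    (∀ p q : ℝ,
      Matrix.vecMul
        (fun i : Fin (C + 3) =>
          if i.val = 0 then p
          else if i.val = 1 then q
          else if h : i.val < C + 2 then T ⟨i.val - 2, by omega⟩
          else T₀) D = 0) := by
  obtain rfl : D = frictionMatrix T₀ T :=
    eq_frictionMatrix hT₀.ne' (fun c => (hT c).ne') hzero hdiag hoffdiag hlastcol hlastrow hcorner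
  refine ⟨(posSemidef_frictionMatrix hT₀.le fun c => (hT c).le).dotProduct_mulVec_nonneg,
    fun p q => vecMul_frictionMatrix_eq_zero hT₀.ne' (fun c => ?_) ?_⟩
  · simp [cylinderIndex]
  · simp
end

section
/- Let U be a real Banach space, let 𝕌 ⊆ U be a subspace, let s ≥ 1 and a < b be real numbers, and let I be a quadrature functional that is sign-preserving. Let E, S : U → ℝ be continuously Fréchet differentiable with derivatives E′, S′. Let M : U → (U × U → ℝ) assign to each u ∈ U a continuous bilinear form M(u)(·,·) on U, and let B̃, D̃ : U × U → (U × U → ℝ) assign to each pair a continuous bilinear form, such that for all u, w ∈ U: B̃(u, w) is skew-symmetric (B̃(u, w)(p, q) = −B̃(u, w)(q, p) for all p, q), D̃(u, w) is positive semidefinite (D̃(u, w)(p, p) ≥ 0 for all p), B̃(u, w)(p, w) = 0 for all p, and D̃(u, w)(p, w) = 0 for all p. Suppose u : ℝ → U is a polynomial map of degree ≤ s with values in 𝕌 and g_E, g_S : ℝ → U are polynomial maps of degree ≤ s−1 with values in 𝕌, such that for every polynomial map v : ℝ → U of degree ≤ s−1 with values in 𝕌: (i) I(t ↦ M(u(t))(u′(t),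 v(t))) = I(t ↦ B̃(u(t), g_S(t))(g_E(t), v(t)) + D̃(u(t), g_E(t))(g_S(t), v(t))); (ii) I(t ↦ M(u(t))(v(t), g_E(t))) = ∫_a^b E′(u(t))(v(t)) dt; and (iii) I(t ↦ M(u(t))(v(t), g_S(t))) = ∫_a^b S′(u(t))(v(t)) dt. Then E(u(b)) = E(u(a)) and S(u(b)) ≥ S(u(a)). -/
/-!
Testing (i) against `g_E` kills its right-hand side (skew-symmetry of `B̃` and degeneracy of
`D̃`), while testing (ii) against `u'`, again a polynomial of degree `≤ s - 1` in `𝕌`, identifies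
the left-hand side with `∫ E'(u) u' = E(u b) - E(u a)`. Testing (i) against `g_S` and (iii)
against `u'` likewise gives `S(u b) - S(u a) = I(D̃(u, g_E)(g_S, g_S)) ≥ 0`.
-/

/-- `u : ℝ → U` is a polynomial map of degree at most `k` with coefficients in the
subspace `𝕌`, i.e. `u(t) = Σ_{i=0}^{k} t^i • c_i` with each `c_i ∈ 𝕌`. -/
def IsPolyMapIn {U : Type*} [AddCommGroup U] [Module ℝ U] (𝕌 : Submodule ℝ U)
    (k : ℕ) (u : ℝ → U) : Prop :=
  ∃ c : Fin (k + 1) → U, (∀ i, c i ∈ 𝕌) ∧ ∀ t : ℝ, u t = ∑ i : Fin (k + 1), t ^ (i : ℕ) • c i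

section PolyMap

variable {U : Type*} [NormedAddCommGroup U] [NormedSpace ℝ U]

theorem hasDerivAt_sum_pow_smul {k : ℕ} (c : Fin (k + 1) → U) (t : ℝ) :
    HasDerivAt (fun t : ℝ => ∑ i : Fin (k + 1), t ^ (i : ℕ) • c i)
      (∑ j : Fin k, t ^ (j : ℕ) • (((j : ℕ) + 1 : ℝ) • c j.succ)) t := by
  have hsum := HasDerivAt.fun_sum (u := Finset.univ) fun (i : Fin (k + 1)) _ =>
    (hasDerivAt_pow (i : ℕ) t).smul_const (c i)
  convert hsum using 1
  rw [Fin.sum_univ_succ]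
  simp only [Fin.val_zero, Nat.cast_zero, zero_mul, zero_smul, zero_add, Fin.val_succ,
    Nat.add_sub_cancel, smul_smul]
  refine Finset.sum_congr rfl fun j _ => ?_
  push_cast
  ring_nf

variable {𝕌 : Submodule ℝ U} {k : ℕ} {u : ℝ → U}

theorem IsPolyMapIn.contDiff (hu : IsPolyMapIn 𝕌 k u) {n : WithTop ℕ∞} : ContDiff ℝ n u := by
  obtain ⟨c, -, hcu⟩ := hu
  rw [funext hcu]
  fun_prop

theorem IsPolyMapIn.deriv (hu : IsPolyMapIn 𝕌 k u) : IsPolyMapIn 𝕌 (k - 1) (deriv u) := by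
  obtain ⟨c, hc𝕌, hcu⟩ := hu
  have hderiv t := (funext hcu ▸ hasDerivAt_sum_pow_smul c t).deriv
  cases k with
  | zero => exact ⟨0, fun _ => zero_mem _, fun t => by simp [hderiv]⟩
  | succ m =>
    exact ⟨fun j => (((j : ℕ) + 1 : ℝ) • c j.succ), fun j => 𝕌.smul_mem _ (hc𝕌 _), hderiv⟩

end PolyMap

theorem integral_fderiv_apply_deriv_eq_sub {U : Type*} [NormedAddCommGroup U]
    [NormedSpace ℝ U] {F : U → ℝ} (hF : ContDiff ℝ 1 F) {u : ℝ → U} (hu : ContDiff ℝ 1 u)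
    (a b : ℝ) : ∫ t in a..b, fderiv ℝ F (u t) (deriv u t) = F (u b) - F (u a) := by
  apply intervalIntegral.integral_eq_sub_of_hasDerivAt
  · intro t _
    exact (hF.differentiable one_ne_zero (u t)).hasFDerivAt.comp_hasDerivAt t
      (hu.differentiable one_ne_zero t).hasDerivAt
  · exact (((hF.continuous_fderiv one_ne_zero).comp hu.continuous).clm_apply
      (hu.continuous_deriv le_rfl)).intervalIntegrable a b

theorem generic_pde_scheme_energy_entropy_general
    (U : Type*) [NormedAddCommGroup U] [NormedSpace ℝ U]
    (𝕌 : Submodule ℝ U) (s : ℕ) (a b : ℝ)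
    (I : (ℝ → ℝ) →ₗ[ℝ] ℝ)
    (hIpos : ∀ φ : ℝ → ℝ, (∀ t, 0 ≤ φ t) → 0 ≤ I φ)
    (E S : U → ℝ) (hE : ContDiff ℝ 1 E) (hS : ContDiff ℝ 1 S)
    (M : U → U →L[ℝ] U →L[ℝ] ℝ)
    (Bt Dt : U → U → U →L[ℝ] U →L[ℝ] ℝ)
    (hBskew : ∀ u w p q, Bt u w p q = -Bt u w q p)
    (hDpos : ∀ u w p, 0 ≤ Dt u w p p)
    (hBdeg : ∀ u w p, Bt u w p w = 0)
    (hDdeg : ∀ u w p, Dt u w p w = 0)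
    (u : ℝ → U) (hu : IsPolyMapIn 𝕌 s u)
    (gE gS : ℝ → U)
    (hgE : IsPolyMapIn 𝕌 (s - 1) gE) (hgS : IsPolyMapIn 𝕌 (s - 1) gS)
    (h1 : ∀ v : ℝ → U, IsPolyMapIn 𝕌 (s - 1) v →
      I (fun t => M (u t) (deriv u t) (v t)) =
        I (fun t => Bt (u t) (gS t) (gE t) (v t) + Dt (u t) (gE t) (gS t) (v t)))
    (h2 : ∀ v : ℝ → U, IsPolyMapIn 𝕌 (s - 1) v →
      I (fun t => M (u t) (v t) (gE t)) = ∫ t in a..b, fderiv ℝ E (u t) (v t))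
    (h3 : ∀ v : ℝ → U, IsPolyMapIn 𝕌 (s - 1) v →
      I (fun t => M (u t) (v t) (gS t)) = ∫ t in a..b, fderiv ℝ S (u t) (v t)) :
    E (u b) = E (u a) ∧ S (u a) ≤ S (u b) := by
  have hB_self : ∀ x w p, Bt x w p p = 0 := fun x w p => by linarith [hBskew x w p p]
  have hE_change := integral_fderiv_apply_deriv_eq_sub hE hu.contDiff a b
  have hS_change := integral_fderiv_apply_deriv_eq_sub hS hu.contDiff a b
  rw [← h2 _ hu.deriv, h1 gE hgE] at hE_change
  rw [← h3 _ hu.deriv, h1 gS hgS] at hS_change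
  simp only [hB_self, hDdeg, hBdeg, add_zero, zero_add] at hE_change hS_change
  have hE_zero : I (fun _ => 0) = 0 := map_zero I
  have hS_nonneg := hIpos _ fun t => hDpos (u t) (gE t) (gS t)
  constructor <;> linarith

/-- Theorem 4.2: the auxiliary-variable space–time discretisation of a
GENERIC PDE with mass operator `M`, extended Poisson operator `B̃` (skew-symmetric, with
`B̃(u,w)(·,w) = 0`) and extended friction operator `D̃` (positive semidefinite, with
`D̃(u,w)(·,w) = 0`), driven by a sign-preserving quadrature functional `I`, conserves the
energy `E` and does not decrease the entropy `S` over the timestep `[a, b]`. -/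
theorem generic_pde_scheme_energy_entropy
    (U : Type*) [NormedAddCommGroup U] [NormedSpace ℝ U] [CompleteSpace U]
    (𝕌 : Submodule ℝ U) (s : ℕ) (hs : 1 ≤ s) (a b : ℝ) (hab : a < b)
    (I : (ℝ → ℝ) →ₗ[ℝ] ℝ)
    (hIpos : ∀ φ : ℝ → ℝ, (∀ t, 0 ≤ φ t) → 0 ≤ I φ)
    (E S : U → ℝ) (hE : ContDiff ℝ 1 E) (hS : ContDiff ℝ 1 S)
    (M : U → U →L[ℝ] U →L[ℝ] ℝ)
    (Bt Dt : U → U → U →L[ℝ] U →L[ℝ] ℝ)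
    (hBskew : ∀ u w p q, Bt u w p q = -Bt u w q p)
    (hDpos : ∀ u w p, 0 ≤ Dt u w p p)
    (hBdeg : ∀ u w p, Bt u w p w = 0)
    (hDdeg : ∀ u w p, Dt u w p w = 0)
    (u : ℝ → U) (hu : IsPolyMapIn 𝕌 s u)
    (gE gS : ℝ → U)
    (hgE : IsPolyMapIn 𝕌 (s - 1) gE) (hgS : IsPolyMapIn 𝕌 (s - 1) gS)
    (h1 : ∀ v : ℝ → U, IsPolyMapIn 𝕌 (s - 1) v →
      I (fun t => M (u t) (deriv u t) (v t)) =
        I (fun t => Bt (u t) (gS t) (gE t) (v t) + Dt (u t) (gE t) (gS t) (v t)))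
    (h2 : ∀ v : ℝ → U, IsPolyMapIn 𝕌 (s - 1) v →
      I (fun t => M (u t) (v t) (gE t)) = ∫ t in a..b, fderiv ℝ E (u t) (v t))
    (h3 : ∀ v : ℝ → U, IsPolyMapIn 𝕌 (s - 1) v →
      I (fun t => M (u t) (v t) (gS t)) = ∫ t in a..b, fderiv ℝ S (u t) (v t)) :
    E (u b) = E (u a) ∧ S (u a) ≤ S (u b) :=
  generic_pde_scheme_energy_entropy_general U 𝕌 s a b I hIpos E S hE hS M Bt Dt hBskew hDpos hBdeg
    hDdeg u hu gE gS hgE hgS h1 h2 h3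
end
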